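/- Let F be a field of characteristic p > 0 and E = F(b_1^{1/p^{m_1}},…,b_r^{1/p^{m_r}}) a purely inseparable extension of exponent e with b_1,…,b_r ∈ F∖F^p and integers m_1,…,m_r ≥ 1. Then for every t with 1 ≤ t ≤ e − 1, every v ∈ Ω_F^{n-1}, and all k_1,…,k_r ∈ ℕ such that max{1, p^{t−m_j+1}} divides k_j for j = 1,…,r, the class of b_1^{k_1}···b_r^{k_r}·(dv)^{[p^t]} lies in H_p^{n+1}(E/F), and it can be written as a sum of the generators of K_F((b_1,m_1),…,(b_r,m_r)) of degree at most t (where a generator of type (ii) has degree t if its exponent on dv is p^t and not all k(t,1),…,k(t,r) are divisible by p). -/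

import Mathlib

noncomputable section

/-- The full algebra of absolute differential forms of a field `F`:
the exterior algebra of the `F`-module of absolute Kähler differentials `Ω[F⁄ℤ]`. -/
abbrev DF (F : Type*) [Field F] : Type _ :=
  ExteriorAlgebra F (KaehlerDifferential ℤ F)

/-- `Ω_F^n`, the space of differential `n`-forms, as a submodule of `DF F`. -/
def omegaPow (F : Type*) [Field F] (n : ℕ) : Submodule F (DF F) :=
  LinearMap.range (ExteriorAlgebra.ι F :
    KaehlerDifferential ℤ F →ₗ[F] DF F) ^ n

/-- `Ω_F^{n-1}`, with the convention `Ω_F^{-1} = 0`. -/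
def omegaPred (F : Type*) [Field F] : ℕ → Submodule F (DF F)
  | 0 => ⊥
  | n + 1 => omegaPow F n

/-- The exact 1-form `d a` of an element `a ∈ F`. -/
def dForm (F : Type*) [Field F] (a : F) : DF F :=
  ExteriorAlgebra.ι F (KaehlerDifferential.D ℤ F a)

/-- The logarithmic 1-form `da/a` of an element `a ∈ F`. -/
def dLog (F : Type*) [Field F] (a : F) : DF F :=
  ExteriorAlgebra.ι F (a⁻¹ • KaehlerDifferential.D ℤ F a)

/-- The logarithmic `n`-form `(dx₁/x₁) ∧ … ∧ (dxₙ/xₙ)`. -/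
def logForm (F : Type*) [Field F] {n : ℕ} (x : Fin n → F) : DF F :=
  (List.ofFn fun i => dLog F (x i)).prod

/-- The exterior derivative `d` together with the (`p`-basis dependent) additive map `s_p`
on the differential forms of a field `F` of characteristic `p`. -/
structure DiffStr (p : ℕ) (F : Type*) [Field F] where
  d : DF F →+ DF F
  sp : DF F →+ DF F
  d_grade : ∀ n : ℕ, ∀ ω ∈ omegaPow F n, d ω ∈ omegaPow F (n + 1)
  d_d : ∀ ω : DF F, d (d ω) = 0
  d_one : d 1 = 0
  d_smul : ∀ (a : F) (ω : DF F), d (a • ω) = dForm F a * ω + a • d ω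
  sp_grade : ∀ n : ℕ, ∀ ω ∈ omegaPow F n, sp ω ∈ omegaPow F n
  sp_log : ∀ (n : ℕ) (a : F) (x : Fin n → F),
      ∃ η ∈ omegaPred F n, sp (a • logForm F x) = a ^ p • logForm F x + d η

/-- The Artin–Schreier map `℘ = s_p − id` on differential forms. -/
def asMap {p : ℕ} {F : Type*} [Field F] (S : DiffStr p F) : DF F →+ DF F :=
  S.sp - AddMonoidHom.id (DF F)

/-- The subgroup `℘Ω_F^n + dΩ_F^{n-1}` of `Ω_F^n`; the group `H_p^{n+1}(F)` is the quotient
of `Ω_F^n` by this subgroup. -/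
def hRel {p : ℕ} {F : Type*} [Field F] (S : DiffStr p F) (n : ℕ) : AddSubgroup (DF F) :=
  ((omegaPow F n).toAddSubgroup.map (asMap S)) ⊔ ((omegaPred F n).toAddSubgroup.map S.d)

/-- The `t`-th iterate `v ↦ v^{[p^t]}` of the map `s_p`. -/
def spIter {p : ℕ} {F : Type*} [Field F] (S : DiffStr p F) (t : ℕ) : DF F → DF F :=
  (fun x => S.sp x)^[t]

/-- `ν_n(F) = ker(℘ : Ω_F^n → Ω_F^n/dΩ_F^{n-1})`. -/
def nuSet {p : ℕ} {F : Type*} [Field F] (S : DiffStr p F) (n : ℕ) : Set (DF F) :=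
  { η | η ∈ omegaPow F n ∧ ∃ z ∈ omegaPred F n, S.sp η - η = S.d z }

/-- Restriction of differential forms along a field extension `E/F`. -/
structure DiffRes (p : ℕ) (F E : Type*) [Field F] [Field E] [Algebra F E]
    (SF : DiffStr p F) (SE : DiffStr p E) where
  res : DF F →+ DF E
  res_one : res 1 = 1
  res_mul : ∀ x y : DF F, res (x * y) = res x * res y
  res_smul : ∀ (a : F) (ω : DF F), res (a • ω) = algebraMap F E a • res ω
  res_dForm : ∀ a : F, res (dForm F a) = dForm E (algebraMap F E a)
  res_grade : ∀ n : ℕ, ∀ ω ∈ omegaPow F n, res ω ∈ omegaPow E n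
  res_d : ∀ ω : DF F, res (SF.d ω) = SE.d (res ω)

/-!
Up to exact forms and error terms `Σ_{i<j} s_p^i(dζ_i)`, the map `s_p^j` is `p^j`-semilinear
and sends `db ∧ w` to `b^{p^j-1} db ∧ w'`. Write `b^k = c · y^{p^j}` with the exponents of `c`
reduced mod `p^j`. Then `b^k (dv)^{[p^j]}` is `c · s_p^j(y dv)` up to error terms, which lie in
`K_F((b₁,m₁),…,(b_r,m_r))` by induction on `j`, and `c · s_p^j(y dv)` reduces to generators by
induction on the monomial `y`: `xy·dz = x·d(yz) + y·d(xz) − d(xyz)` handles products and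
`b dw = d(bw) − db ∧ w` a single `bₗ`. Over `E` every generator dies because `bᵢ` is a `p`-th
power and `∏ bᵢ^{k'ᵢ}` a `p^{t'+1}`-th power, and `a^{p^{t'+1}} (dw)^{[p^{t'}]}` lies in
`℘Ω^n + dΩ^{n-1}`.
-/

section Forms

variable {F : Type*} [Field F]

theorem mem_omegaPred_zero {z : DF F} : z ∈ omegaPred F 0 ↔ z = 0 := Submodule.mem_bot F

theorem dForm_mul (a b : F) : dForm F (a * b) = a • dForm F b + b • dForm F a := by
  simp only [dForm, Derivation.leibniz, map_add, map_smul]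

theorem dForm_eq_smul_dLog (a : F) : dForm F a = a • dLog F a := by
  rcases eq_or_ne a 0 with rfl | ha
  · simp [dForm, dLog]
  · rw [dForm, dLog, map_smul, smul_smul, mul_inv_cancel₀ ha, one_smul]

theorem dLog_eq_inv_smul_dForm (a : F) : dLog F a = a⁻¹ • dForm F a := map_smul _ _ _

theorem dForm_pow_char {p : ℕ} [CharP F p] (a : F) : dForm F (a ^ p) = 0 := by
  rw [dForm, Derivation.leibniz_pow, ← Nat.cast_smul_eq_nsmul F, CharP.cast_eq_zero F p,
    zero_smul, map_zero]

theorem dForm_mul_mem_omegaPow (a : F) {n : ℕ} {w : DF F} (hw : w ∈ omegaPred F n) :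
    dForm F a * w ∈ omegaPow F n := by
  cases n with
  | zero => simp [mem_omegaPred_zero.mp hw]
  | succ n => rw [omegaPow, pow_succ']; exact Submodule.mul_mem_mul ⟨_, rfl⟩ hw

theorem logForm_cons {n : ℕ} (a : F) (x : Fin n → F) :
    logForm F (Fin.cons a x) = dLog F a * logForm F x := by
  simp [logForm, List.ofFn_succ]

theorem logForm_snoc {n : ℕ} (x : Fin n → F) (a : F) :
    logForm F (Fin.snoc x a) = logForm F x * dLog F a := by
  rw [logForm, logForm, List.ofFn_succ', List.prod_concat]
  simp [Fin.snoc_castSucc, Fin.snoc_last]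

theorem logForm_mem_omegaPow {n : ℕ} (x : Fin n → F) : logForm F x ∈ omegaPow F n := by
  induction n with
  | zero => exact Submodule.mem_one.mpr ⟨1, map_one _⟩
  | succ n ih =>
    rw [← Fin.cons_self_tail x, logForm_cons, omegaPow, pow_succ']
    exact Submodule.mul_mem_mul ⟨_, rfl⟩ (ih _)

theorem omegaPow_eq_span_logForm (n : ℕ) :
    omegaPow F n = Submodule.span F (Set.range (logForm F (n := n))) := by
  refine le_antisymm ?_ (Submodule.span_le.mpr (Set.range_subset_iff.mpr logForm_mem_omegaPow))
  induction n with
  | zero =>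
    intro x hx
    obtain ⟨y, rfl⟩ := Submodule.mem_one.mp hx
    rw [Algebra.algebraMap_eq_smul_one]
    exact Submodule.smul_mem _ _ (Submodule.subset_span ⟨Fin.elim0, rfl⟩)
  | succ n ih =>
    rw [omegaPow, pow_succ, Submodule.mul_le]
    rintro x hx _ ⟨u, rfl⟩
    have hu : u ∈ Submodule.span F (Set.range (KaehlerDifferential.D ℤ F)) := by
      rw [KaehlerDifferential.span_range_derivation]; trivial
    induction hu using Submodule.span_induction with
    | zero => simp
    | add u₁ u₂ _ _ ih₁ ih₂ => rw [map_add, mul_add]; exact add_mem ih₁ ih₂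
    | smul c u _ ihu => rw [map_smul, mul_smul_comm]; exact Submodule.smul_mem _ _ ihu
    | mem u hu =>
      obtain ⟨a, rfl⟩ := hu
      have hx' := ih hx
      clear hx
      induction hx' using Submodule.span_induction with
      | zero => simp
      | add x₁ x₂ _ _ ih₁ ih₂ => rw [add_mul]; exact add_mem ih₁ ih₂
      | smul c x _ ihx => rw [smul_mul_assoc]; exact Submodule.smul_mem _ _ ihx
      | mem x hx =>
        obtain ⟨v, rfl⟩ := hx
        rw [← dForm, dForm_eq_smul_dLog, mul_smul_comm, ← logForm_snoc]
        exact Submodule.smul_mem _ _ (Submodule.subset_span ⟨_, rfl⟩)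

end Forms

section DiffStr

variable {p : ℕ} {F : Type*} [Field F] (S : DiffStr p F) {n : ℕ}

@[simp]
theorem spIter_zero (x : DF F) : spIter S 0 x = x := rfl

theorem spIter_succ (t : ℕ) (x : DF F) : spIter S (t + 1) x = S.sp (spIter S t x) :=
  Function.iterate_succ_apply' _ _ _

theorem spIter_add (t : ℕ) (x y : DF F) :
    spIter S t (x + y) = spIter S t x + spIter S t y :=
  map_add ((show AddMonoid.End (DF F) from S.sp) ^ t) x y

theorem spIter_sub (t : ℕ) (x y : DF F) :
    spIter S t (x - y) = spIter S t x - spIter S t y :=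
  map_sub ((show AddMonoid.End (DF F) from S.sp) ^ t) x y

theorem spIter_mem_omegaPow (t : ℕ) {x : DF F} (hx : x ∈ omegaPow F n) :
    spIter S t x ∈ omegaPow F n := by
  induction t with
  | zero => exact hx
  | succ t ih => rw [spIter_succ]; exact S.sp_grade n _ ih

theorem DiffStr.d_mem_omegaPow {z : DF F} (hz : z ∈ omegaPred F n) : S.d z ∈ omegaPow F n := by
  cases n with
  | zero => simp [mem_omegaPred_zero.mp hz]
  | succ n => exact S.d_grade n z hz

theorem DiffStr.pow_char_smul_d [CharP F p] (a : F) (η : DF F) :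
    a ^ p • S.d η = S.d (a ^ p • η) := by
  rw [S.d_smul, dForm_pow_char, zero_mul, zero_add]

theorem DiffStr.mul_smul_d (x y : F) (z : DF F) :
    (x * y) • S.d z = x • S.d (y • z) + y • S.d (x • z) - S.d ((x * y) • z) := by
  simp only [S.d_smul, dForm_mul, smul_add, add_mul, smul_mul_assoc, smul_smul, mul_comm y x]
  abel

theorem DiffStr.d_mem_hRel {z : DF F} (hz : z ∈ omegaPred F n) : S.d z ∈ hRel S n :=
  AddSubgroup.mem_sup_right ⟨z, hz, rfl⟩

theorem DiffStr.sp_sub_mem_hRel {u : DF F} (hu : u ∈ omegaPow F n) : S.sp u - u ∈ hRel S n :=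
  AddSubgroup.mem_sup_left ⟨u, hu, rfl⟩

theorem spIter_d_mem_hRel {z : DF F} (hz : z ∈ omegaPred F n) (t : ℕ) :
    spIter S t (S.d z) ∈ hRel S n := by
  induction t with
  | zero => exact S.d_mem_hRel hz
  | succ t ih =>
    rw [spIter_succ, ← sub_add_cancel (S.sp _) (spIter S t _)]
    exact add_mem (S.sp_sub_mem_hRel (spIter_mem_omegaPow S t (S.d_mem_omegaPow hz))) ih

theorem DiffStr.sp_smul [CharP F p] {ω : DF F} (hω : ω ∈ omegaPow F n) (a : F) :
    ∃ ζ ∈ omegaPred F n, S.sp (a • ω) = a ^ p • S.sp ω + S.d ζ := by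
  rw [omegaPow_eq_span_logForm] at hω
  induction hω using Submodule.span_induction generalizing a with
  | zero => exact ⟨0, zero_mem _, by simp⟩
  | add x y _ _ ihx ihy =>
    obtain ⟨ζ₁, hζ₁, h₁⟩ := ihx a
    obtain ⟨ζ₂, hζ₂, h₂⟩ := ihy a
    refine ⟨ζ₁ + ζ₂, add_mem hζ₁ hζ₂, ?_⟩
    simp only [smul_add, map_add, h₁, h₂]
    abel
  | smul c x _ ihx =>
    obtain ⟨ζ₁, hζ₁, h₁⟩ := ihx (a * c)
    obtain ⟨ζ₂, hζ₂, h₂⟩ := ihx c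
    refine ⟨ζ₁ - a ^ p • ζ₂, sub_mem hζ₁ (Submodule.smul_mem _ _ hζ₂), ?_⟩
    rw [smul_smul, h₁, h₂, map_sub, smul_add, smul_smul, ← mul_pow, ← S.pow_char_smul_d]
    abel
  | mem x hx =>
    obtain ⟨v, rfl⟩ := hx
    obtain ⟨η₁, hη₁, h₁⟩ := S.sp_log n a v
    obtain ⟨η₂, hη₂, h₂⟩ := S.sp_log n 1 v
    rw [one_smul, one_pow, one_smul] at h₂
    refine ⟨η₁ - a ^ p • η₂, sub_mem hη₁ (Submodule.smul_mem _ _ hη₂), ?_⟩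
    rw [h₁, h₂, map_sub, smul_add, ← S.pow_char_smul_d]
    abel

theorem DiffStr.sp_dForm_mul [CharP F p] (hp : p ≠ 0) (b : F) {w : DF F}
    (hw : w ∈ omegaPred F n) :
    ∃ w' ∈ omegaPred F n, ∃ ζ ∈ omegaPred F n,
      S.sp (dForm F b * w) = b ^ (p - 1) • (dForm F b * w') + S.d ζ := by
  cases n with
  | zero => exact ⟨0, zero_mem _, 0, zero_mem _, by simp [mem_omegaPred_zero.mp hw]⟩
  | succ n =>
    have hw' : w ∈ omegaPow F n := hw
    rw [omegaPow_eq_span_logForm] at hw'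
    clear hw
    induction hw' using Submodule.span_induction with
    | zero => exact ⟨0, zero_mem _, 0, zero_mem _, by simp⟩
    | add x y _ _ ihx ihy =>
      obtain ⟨w₁, hw₁, ζ₁, hζ₁, h₁⟩ := ihx
      obtain ⟨w₂, hw₂, ζ₂, hζ₂, h₂⟩ := ihy
      refine ⟨w₁ + w₂, add_mem hw₁ hw₂, ζ₁ + ζ₂, add_mem hζ₁ hζ₂, ?_⟩
      simp only [mul_add, smul_add, map_add, h₁, h₂]
      abel
    | smul c x hx ihx =>
      obtain ⟨w₁, hw₁, ζ₁, hζ₁, h₁⟩ := ihx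
      have hx' : x ∈ omegaPred F (n + 1) := (omegaPow_eq_span_logForm n).ge hx
      obtain ⟨ξ, hξ, h₂⟩ := S.sp_smul (dForm_mul_mem_omegaPow b hx') c
      refine ⟨c ^ p • w₁, Submodule.smul_mem _ _ hw₁,
        c ^ p • ζ₁ + ξ, add_mem (Submodule.smul_mem _ _ hζ₁) hξ, ?_⟩
      rw [mul_smul_comm, h₂, h₁, smul_add, map_add, ← S.pow_char_smul_d, mul_smul_comm,
        smul_comm (c ^ p) (b ^ (p - 1))]
      abel
    | mem x hx =>
      obtain ⟨v, rfl⟩ := hx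
      obtain ⟨η, hη, h⟩ := S.sp_log (n + 1) b (Fin.cons b v)
      refine ⟨logForm F v, logForm_mem_omegaPow v, η, hη, ?_⟩
      rw [dForm_eq_smul_dLog, smul_mul_assoc, ← logForm_cons, h, smul_smul, ← pow_succ,
        Nat.sub_add_cancel (Nat.one_le_iff_ne_zero.mpr hp)]

end DiffStr

section IterExact

variable {p : ℕ} {F : Type*} [Field F] (S : DiffStr p F) {n : ℕ}

/-- The sums `Σ_{i<j} s_p^i(dζ_i)`: the error terms by which `s_p^j` fails to be
`p^j`-semilinear. -/
def iterExact (S : DiffStr p F) (n j : ℕ) : AddSubgroup (DF F) :=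
  AddSubgroup.closure {x | ∃ i < j, ∃ ζ ∈ omegaPred F n, x = spIter S i (S.d ζ)}

theorem spIter_d_mem_iterExact {i j : ℕ} (hij : i < j) {ζ : DF F} (hζ : ζ ∈ omegaPred F n) :
    spIter S i (S.d ζ) ∈ iterExact S n j :=
  AddSubgroup.subset_closure ⟨i, hij, ζ, hζ, rfl⟩

theorem sp_mem_iterExact {j : ℕ} {x : DF F} (hx : x ∈ iterExact S n j) :
    S.sp x ∈ iterExact S n (j + 1) := by
  suffices iterExact S n j ≤ (iterExact S n (j + 1)).comap S.sp from this hx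
  rw [iterExact, AddSubgroup.closure_le]
  rintro _ ⟨i, hij, ζ, hζ, rfl⟩
  rw [SetLike.mem_coe, AddSubgroup.mem_comap, ← spIter_succ]
  exact spIter_d_mem_iterExact S (Nat.succ_lt_succ hij) hζ

theorem smul_mem_of_mem_iterExact {K : AddSubgroup (DF F)} {c : F} {j : ℕ}
    (h : ∀ i < j, ∀ ζ ∈ omegaPred F n, c • spIter S i (S.d ζ) ∈ K) {e : DF F}
    (he : e ∈ iterExact S n j) : c • e ∈ K := by
  suffices iterExact S n j ≤ K.comap (DistribSMul.toAddMonoidHom (DF F) c) from this he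
  rw [iterExact, AddSubgroup.closure_le]
  rintro _ ⟨i, hij, ζ, hζ, rfl⟩
  exact h i hij ζ hζ

theorem spIter_smul_sub_mem_iterExact [CharP F p] (a : F) {ω : DF F} (hω : ω ∈ omegaPow F n)
    (j : ℕ) : spIter S j (a • ω) - a ^ p ^ j • spIter S j ω ∈ iterExact S n j := by
  induction j with
  | zero => simp
  | succ j ih =>
    obtain ⟨ζ, hζ, h⟩ := S.sp_smul (spIter_mem_omegaPow S j hω) (a ^ p ^ j)
    have key : spIter S (j + 1) (a • ω) - a ^ p ^ (j + 1) • spIter S (j + 1) ω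
        = S.sp (spIter S j (a • ω) - a ^ p ^ j • spIter S j ω) + S.d ζ := by
      rw [spIter_succ, spIter_succ, map_sub, h, ← pow_mul, ← pow_succ]
      abel
    rw [key]
    exact add_mem (sp_mem_iterExact S ih) (spIter_d_mem_iterExact S (i := 0) j.succ_pos hζ)

theorem spIter_dForm_mul_sub_mem_iterExact [CharP F p] (hp : p ≠ 0) (b : F) {w : DF F}
    (hw : w ∈ omegaPred F n) (j : ℕ) :
    ∃ w' ∈ omegaPred F n,
      spIter S j (dForm F b * w) - b ^ (p ^ j - 1) • (dForm F b * w') ∈ iterExact S n j := by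
  induction j with
  | zero => exact ⟨w, hw, by simp⟩
  | succ j ih =>
    obtain ⟨w₁, hw₁, he⟩ := ih
    obtain ⟨ξ, hξ, h₁⟩ := S.sp_smul (dForm_mul_mem_omegaPow b hw₁) (b ^ (p ^ j - 1))
    obtain ⟨w', hw', ζ, hζ, h₂⟩ := S.sp_dForm_mul hp b hw₁
    have hexp : (p ^ j - 1) * p + (p - 1) = p ^ (j + 1) - 1 := by
      have := Nat.one_le_iff_ne_zero.mpr hp
      have : p ≤ p ^ j * p := Nat.le_mul_of_pos_left p (pow_pos (Nat.pos_of_ne_zero hp) j)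
      rw [pow_succ, Nat.sub_mul, one_mul]
      omega
    have key : spIter S (j + 1) (dForm F b * w) - b ^ (p ^ (j + 1) - 1) • (dForm F b * w')
        = S.sp (spIter S j (dForm F b * w) - b ^ (p ^ j - 1) • (dForm F b * w₁))
          + S.d ξ + S.d ((b ^ (p ^ j - 1)) ^ p • ζ) := by
      rw [← S.pow_char_smul_d, spIter_succ, map_sub, h₁, h₂, smul_add, smul_smul,
        ← pow_mul, ← pow_add, hexp]
      abel
    refine ⟨w', hw', ?_⟩
    rw [key]
    exact add_mem (add_mem (sp_mem_iterExact S he)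
      (spIter_d_mem_iterExact S (i := 0) j.succ_pos hξ))
      (spIter_d_mem_iterExact S (i := 0) j.succ_pos (Submodule.smul_mem _ _ hζ))

theorem iterExact_le_hRel (j : ℕ) : iterExact S n j ≤ hRel S n := by
  rw [iterExact, AddSubgroup.closure_le]
  rintro _ ⟨i, -, ζ, hζ, rfl⟩
  exact spIter_d_mem_hRel S hζ i

theorem pow_smul_spIter_d_mem_hRel [CharP F p] (a : F) (i : ℕ) {ζ : DF F}
    (hζ : ζ ∈ omegaPred F n) : a ^ p ^ (i + 1) • spIter S i (S.d ζ) ∈ hRel S n := by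
  have h := spIter_smul_sub_mem_iterExact S (a ^ p) (S.d_mem_omegaPow hζ) i
  rw [S.pow_char_smul_d, ← pow_mul, ← pow_succ'] at h
  simpa using sub_mem (spIter_d_mem_hRel S (Submodule.smul_mem _ (a ^ p) hζ) i)
    (iterExact_le_hRel S i h)

theorem pow_smul_mem_hRel_of_mem_iterExact [CharP F p] (a : F) {j : ℕ} {e : DF F}
    (he : e ∈ iterExact S n j) : a ^ p ^ j • e ∈ hRel S n := by
  refine smul_mem_of_mem_iterExact S (fun i hij ζ hζ => ?_) he
  obtain ⟨l, rfl⟩ := Nat.exists_eq_add_of_lt hij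
  rw [show p ^ (i + l + 1) = p ^ l * p ^ (i + 1) by ring, pow_mul]
  exact pow_smul_spIter_d_mem_hRel S _ i hζ

end IterExact

section Restriction

variable {p : ℕ} {F E : Type*} [Field F] [Field E] [Algebra F E]
  {SF : DiffStr p F} {SE : DiffStr p E} (R : DiffRes p F E SF SE) {n : ℕ}

theorem DiffRes.res_dLog (a : F) : R.res (dLog F a) = dLog E (algebraMap F E a) := by
  rw [dLog_eq_inv_smul_dForm, dLog_eq_inv_smul_dForm, R.res_smul, R.res_dForm, map_inv₀]

theorem DiffRes.res_logForm {k : ℕ} (x : Fin k → F) :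
    R.res (logForm F x) = logForm E (algebraMap F E ∘ x) := by
  induction k with
  | zero => exact R.res_one
  | succ k ih =>
    rw [← Fin.cons_self_tail x, logForm_cons, R.res_mul, R.res_dLog, ih, Fin.comp_cons,
      logForm_cons]

theorem DiffRes.res_mem_omegaPred {z : DF F} (hz : z ∈ omegaPred F n) :
    R.res z ∈ omegaPred E n := by
  cases n with
  | zero => simp [mem_omegaPred_zero.mp hz, omegaPred]
  | succ n => exact R.res_grade n z hz

theorem DiffRes.res_sp [CharP F p] [CharP E p] {x : DF F} (hx : x ∈ omegaPow F n) :
    ∃ ζ ∈ omegaPred E n, R.res (SF.sp x) = SE.sp (R.res x) + SE.d ζ := by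
  have hx' := hx
  rw [omegaPow_eq_span_logForm] at hx'
  clear hx
  induction hx' using Submodule.span_induction with
  | zero => exact ⟨0, zero_mem _, by simp⟩
  | add x y _ _ ihx ihy =>
    obtain ⟨ζ₁, hζ₁, h₁⟩ := ihx
    obtain ⟨ζ₂, hζ₂, h₂⟩ := ihy
    exact ⟨ζ₁ + ζ₂, add_mem hζ₁ hζ₂, by simp only [map_add, h₁, h₂]; abel⟩
  | smul c x hx ihx =>
    have hx : x ∈ omegaPow F n := (omegaPow_eq_span_logForm n).ge hx
    obtain ⟨ζ, hζ, h₁⟩ := ihx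
    obtain ⟨ζ₀, hζ₀, h₂⟩ := SF.sp_smul hx c
    obtain ⟨ξ, hξ, h₃⟩ := SE.sp_smul (R.res_grade n x hx) (algebraMap F E c)
    refine ⟨algebraMap F E c ^ p • ζ + R.res ζ₀ - ξ,
      sub_mem (add_mem (Submodule.smul_mem _ _ hζ) (R.res_mem_omegaPred hζ₀)) hξ, ?_⟩
    rw [h₂, map_add, R.res_smul, map_pow, h₁, R.res_smul, h₃, R.res_d, map_sub, map_add,
      smul_add, SE.pow_char_smul_d]
    abel
  | mem x hx =>
    obtain ⟨v, rfl⟩ := hx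
    obtain ⟨η, hη, h₁⟩ := SF.sp_log n 1 v
    obtain ⟨η', hη', h₂⟩ := SE.sp_log n 1 (algebraMap F E ∘ v)
    simp only [one_smul, one_pow] at h₁ h₂
    refine ⟨R.res η - η', sub_mem (R.res_mem_omegaPred hη) hη', ?_⟩
    rw [h₁, map_add, R.res_d, R.res_logForm, h₂, map_sub]
    abel

theorem DiffRes.res_spIter_d_mem_iterExact [CharP F p] [CharP E p] {w : DF F}
    (hw : w ∈ omegaPred F n) (j : ℕ) :
    R.res (spIter SF j (SF.d w)) ∈ iterExact SE n (j + 1) := by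
  induction j with
  | zero => exact R.res_d w ▸ spIter_d_mem_iterExact SE zero_lt_one (R.res_mem_omegaPred hw)
  | succ j ih =>
    obtain ⟨ζ, hζ, h⟩ := R.res_sp (spIter_mem_omegaPow SF j (SF.d_mem_omegaPow hw))
    rw [spIter_succ, h]
    exact add_mem (sp_mem_iterExact SE ih) (spIter_d_mem_iterExact SE (i := 0) (by omega) hζ)

theorem DiffRes.res_mem_hRel [CharP F p] [CharP E p] {x : DF F} (hx : x ∈ hRel SF n) :
    R.res x ∈ hRel SE n := by
  suffices hRel SF n ≤ (hRel SE n).comap R.res from this hx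
  refine sup_le ?_ ?_
  · rintro _ ⟨u, hu, rfl⟩
    obtain ⟨ζ, hζ, h⟩ := R.res_sp hu
    rw [AddSubgroup.mem_comap, asMap, AddMonoidHom.sub_apply, map_sub, h, add_sub_right_comm]
    exact add_mem (SE.sp_sub_mem_hRel (R.res_grade n u hu)) (SE.d_mem_hRel hζ)
  · rintro _ ⟨z, hz, rfl⟩
    rw [AddSubgroup.mem_comap, R.res_d]
    exact SE.d_mem_hRel (R.res_mem_omegaPred hz)

theorem DiffRes.res_smul_spIter_d_mem_hRel [CharP F p] [CharP E p] {c : F} {a : E} {j : ℕ}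
    (hc : algebraMap F E c = a ^ p ^ (j + 1)) {w : DF F} (hw : w ∈ omegaPred F n) :
    R.res (c • spIter SF j (SF.d w)) ∈ hRel SE n := by
  rw [R.res_smul, hc]
  exact pow_smul_mem_hRel_of_mem_iterExact SE a (R.res_spIter_d_mem_iterExact hw j)

end Restriction

section Generators

variable {p : ℕ} {F : Type*} [Field F] (S : DiffStr p F) {n : ℕ}

theorem smul_spIter_smul_d_mem_of_mem_closure {K : AddSubgroup (DF F)} {s : Set F} {c : F}
    {j : ℕ} (hone : ∀ w ∈ omegaPred F n, c • spIter S j (S.d w) ∈ K)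
    (hmem : ∀ x ∈ s, ∀ w ∈ omegaPred F n, c • spIter S j (x • S.d w) ∈ K)
    {y : F} (hy : y ∈ Submonoid.closure s) {w : DF F} (hw : w ∈ omegaPred F n) :
    c • spIter S j (y • S.d w) ∈ K := by
  induction hy using Submonoid.closure_induction generalizing w with
  | mem x hx => exact hmem x hx w hw
  | one => rw [one_smul]; exact hone w hw
  | mul x y _ _ ihx ihy =>
    rw [S.mul_smul_d, spIter_sub, spIter_add, smul_sub, smul_add]
    exact sub_mem (add_mem (ihx (Submodule.smul_mem _ y hw)) (ihy (Submodule.smul_mem _ x hw)))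
      (hone _ (Submodule.smul_mem _ _ hw))

theorem smul_spIter_smul_d_mem [CharP F p] (hp : p ≠ 0) {K : AddSubgroup (DF F)} {c x : F}
    {j : ℕ} (hexact : ∀ a : ℕ, ∀ z ∈ omegaPred F n, (c * x ^ a) • S.d z ∈ K)
    (hone : ∀ w ∈ omegaPred F n, c • spIter S j (S.d w) ∈ K)
    (herr : ∀ e ∈ iterExact S n j, c • e ∈ K) {w : DF F} (hw : w ∈ omegaPred F n) :
    c • spIter S j (x • S.d w) ∈ K := by
  obtain ⟨w₁, hw₁, he⟩ := spIter_dForm_mul_sub_mem_iterExact S hp x hw j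
  have key : c • spIter S j (x • S.d w)
      = c • spIter S j (S.d (x • w))
        - c • (spIter S j (dForm F x * w) - x ^ (p ^ j - 1) • (dForm F x * w₁))
        - (c * x ^ (p ^ j - 1)) • S.d (x • w₁) + (c * x ^ (p ^ j - 1 + 1)) • S.d w₁ := by
    have hxw : x • S.d w = S.d (x • w) - dForm F x * w := by rw [S.d_smul]; abel
    rw [hxw, spIter_sub, S.d_smul x w₁, pow_succ]
    module
  rw [key]
  exact add_mem (sub_mem (sub_mem (hone _ (Submodule.smul_mem _ _ hw)) (herr _ he))
    (hexact _ _ (Submodule.smul_mem _ _ hw₁))) (hexact _ _ hw₁)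

end Generators

theorem pow_dvd_pow_mul_of_pow_sub_dvd {p a b k : ℕ} (h : p ^ (a - b) ∣ k) :
    p ^ a ∣ p ^ b * k :=
  (pow_dvd_pow p le_add_tsub).trans (by rw [pow_add]; exact mul_dvd_mul_left _ h)

section KGenerators

variable {p : ℕ} {F : Type*} [Field F] (S : DiffStr p F) {r : ℕ} (b : Fin r → F)
  (m : Fin r → ℕ) {n t : ℕ}

/-- The generators of `K_F((b₁,m₁),…,(b_r,m_r))` of degree at most `t`, together with the
relations `℘Ω_F^n + dΩ_F^{n-1}` defining `H_p^{n+1}(F)`. -/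
def kGenerators (n t : ℕ) : Set (DF F) :=
  (hRel S n : Set (DF F)) ∪ { x | ∃ i : Fin r, ∃ z ∈ omegaPred F n, x = b i • S.d z } ∪
    { x | ∃ (t' : ℕ) (k' : Fin r → ℕ), 0 < t' ∧ t' ≤ t ∧
        (∀ i, k' i < p ^ t' ∧ p ^ (t' + 1 - m i) ∣ k' i) ∧
        ∃ w ∈ omegaPred F n, x = (∏ i, b i ^ k' i) • spIter S t' (S.d w) }

theorem prod_pow_mem_closure_range (k : Fin r → ℕ) :
    ∏ i, b i ^ k i ∈ Submonoid.closure (Set.range b) :=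
  prod_mem fun i _ => pow_mem (Submonoid.subset_closure (Set.mem_range_self i)) _

theorem smul_d_mem_closure_kGenerators {y : F} (hy : y ∈ Submonoid.closure (Set.range b))
    {z : DF F} (hz : z ∈ omegaPred F n) :
    y • S.d z ∈ AddSubgroup.closure (kGenerators S b m n t) := by
  simpa using smul_spIter_smul_d_mem_of_mem_closure S (s := Set.range b) (c := 1) (j := 0)
    (fun w hw => AddSubgroup.subset_closure (.inl (.inl (by simpa using S.d_mem_hRel hw))))
    (fun _ ⟨i, hi⟩ w hw => AddSubgroup.subset_closure (.inl (.inr ⟨i, w, hw, by simp [hi]⟩)))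
    hy hz

theorem prod_pow_smul_spIter_d_mem_closure_kGenerators [CharP F p] (hp : p ≠ 0)
    (hm : ∀ i, 1 ≤ m i) {j : ℕ} (hj : j ≤ t) (k : Fin r → ℕ)
    (hk : ∀ i, p ^ (j + 1 - m i) ∣ k i) {w : DF F} (hw : w ∈ omegaPred F n) :
    (∏ i, b i ^ k i) • spIter S j (S.d w) ∈ AddSubgroup.closure (kGenerators S b m n t) := by
  induction j using Nat.strong_induction_on generalizing k w with
  | _ j IH =>
  rcases j.eq_zero_or_pos with rfl | hj₀
  · exact smul_d_mem_closure_kGenerators S b m (prod_pow_mem_closure_range b k) hw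
  set K := AddSubgroup.closure (kGenerators S b m n t)
  set c := ∏ i, b i ^ (k i % p ^ j)
  set y := ∏ i, b i ^ (k i / p ^ j)
  have hck : ∀ i, k i % p ^ j < p ^ j ∧ p ^ (j + 1 - m i) ∣ k i % p ^ j := fun i =>
    ⟨Nat.mod_lt _ (pow_pos (Nat.pos_of_ne_zero hp) j),
      (Nat.dvd_mod_iff (pow_dvd_pow p (by have := hm i; omega))).mpr (hk i)⟩
  have hone : ∀ w ∈ omegaPred F n, c • spIter S j (S.d w) ∈ K := fun w hw =>
    AddSubgroup.subset_closure (.inr ⟨j, _, hj₀, hj, hck, w, hw, rfl⟩)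
  have herr : ∀ e ∈ iterExact S n j, c • e ∈ K := fun e he =>
    smul_mem_of_mem_iterExact S (fun i hij ζ hζ => IH i hij (hij.le.trans hj) _
      (fun l => (pow_dvd_pow p (by omega)).trans (hck l).2) hζ) he
  have hy : c • spIter S j (y • S.d w) ∈ K := by
    refine smul_spIter_smul_d_mem_of_mem_closure S (s := Set.range b) hone (fun _ ⟨l, hl⟩ w hw => ?_)
      (prod_pow_mem_closure_range b _) hw
    refine hl ▸ smul_spIter_smul_d_mem S hp (fun a z hz => ?_) hone herr hw
    exact smul_d_mem_closure_kGenerators S b m (mul_mem (prod_pow_mem_closure_range b _)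
      (pow_mem (Submonoid.subset_closure (Set.mem_range_self l)) a)) hz
  have hsplit : ∏ i, b i ^ k i = c * y ^ p ^ j := by
    rw [← Finset.prod_pow, ← Finset.prod_mul_distrib]
    refine Finset.prod_congr rfl fun i _ => ?_
    rw [← pow_mul, ← pow_add, Nat.mod_add_div']
  have hsemi := spIter_smul_sub_mem_iterExact S y (S.d_mem_omegaPow hw) j
  rw [hsplit, mul_smul, ← sub_sub_cancel (spIter S j (y • S.d w)) (y ^ p ^ j • _), smul_sub]
  exact sub_mem hy (herr _ hsemi)

theorem res_mem_hRel_of_mem_closure_kGenerators {E : Type*} [Field E] [Algebra F E]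
    [CharP F p] [CharP E p] {SE : DiffStr p E} (R : DiffRes p F E S SE) (hm : ∀ i, 1 ≤ m i)
    {β : Fin r → E} (hβ : ∀ i, β i ^ p ^ m i = algebraMap F E (b i)) {x : DF F}
    (hx : x ∈ AddSubgroup.closure (kGenerators S b m n t)) : R.res x ∈ hRel SE n := by
  suffices AddSubgroup.closure (kGenerators S b m n t) ≤ (hRel SE n).comap R.res from this hx
  rw [AddSubgroup.closure_le]
  rintro _ ((hx | ⟨i, z, hz, rfl⟩) | ⟨t', k', -, -, hk', w, hw, rfl⟩)
  · exact R.res_mem_hRel hx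
  · refine R.res_smul_spIter_d_mem_hRel (j := 0) (a := β i ^ p ^ (m i - 1)) ?_ hz
    rw [← pow_mul, ← pow_add, zero_add, Nat.sub_add_cancel (hm i), hβ]
  · refine R.res_smul_spIter_d_mem_hRel
      (a := ∏ l, β l ^ (p ^ m l * k' l / p ^ (t' + 1))) ?_ hw
    rw [map_prod, ← Finset.prod_pow]
    refine Finset.prod_congr rfl fun l _ => ?_
    rw [map_pow, ← hβ l, ← pow_mul, ← pow_mul,
      Nat.div_mul_cancel (pow_dvd_pow_mul_of_pow_sub_dvd (hk' l).2)]

end KGenerators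

theorem hKernel_generators_degree_le_general
    (p : ℕ) (hp : p.Prime) (F E : Type*) [Field F] [Field E] [Algebra F E]
    [CharP F p] [CharP E p]
    (SF : DiffStr p F) (SE : DiffStr p E) (R : DiffRes p F E SF SE)
    (r : ℕ) (b : Fin r → F) (m : Fin r → ℕ)
    (hm : ∀ i, 1 ≤ m i)
    (β : Fin r → E) (hβ : ∀ i, β i ^ p ^ m i = algebraMap F E (b i))
    (n t : ℕ)
    (k : Fin r → ℕ) (hk : ∀ j, p ^ (t + 1 - m j) ∣ k j)
    (v : DF F) (hv : v ∈ omegaPred F n) :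
    R.res ((∏ i, b i ^ k i) • spIter SF t (SF.d v)) ∈ hRel SE n ∧
    (∏ i, b i ^ k i) • spIter SF t (SF.d v) ∈
      AddSubgroup.closure ((hRel SF n : Set (DF F)) ∪
        { x | ∃ i : Fin r, ∃ z ∈ omegaPred F n, x = b i • SF.d z } ∪
        { x | ∃ (t' : ℕ) (k' : Fin r → ℕ), 0 < t' ∧ t' ≤ t ∧
            (∀ i, k' i < p ^ t' ∧ p ^ (t' + 1 - m i) ∣ k' i) ∧
            ∃ w ∈ omegaPred F n, x = (∏ i, b i ^ k' i) • spIter SF t' (SF.d w) }) := by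
  have hmem : (∏ i, b i ^ k i) • spIter SF t (SF.d v) ∈
      AddSubgroup.closure (kGenerators SF b m n t) :=
    prod_pow_smul_spIter_d_mem_closure_kGenerators SF b m hp.ne_zero hm le_rfl k hk hv
  exact ⟨res_mem_hRel_of_mem_closure_kGenerators SF b m R hm hβ hmem, hmem⟩

/-- **Corollary 3.7 (37).** Let `E = F(b₁^{1/p^{m₁}},…,b_r^{1/p^{m_r}})` be purely
inseparable of exponent `e = max{m₁,…,m_r}` with `bᵢ ∈ F∖F^p`, `mᵢ ≥ 1`. For every
`1 ≤ t ≤ e−1` and all `k₁,…,k_r ∈ ℕ` with `max{1, p^{t−mⱼ+1}} ∣ kⱼ`, the class of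
`b₁^{k₁}⋯b_r^{k_r}·(dv)^{[p^t]}` lies in `H_p^{n+1}(E/F)` and can be written as a sum of
generators of `K_F((b₁,m₁),…,(b_r,m_r))` of degree at most `t`. -/
theorem hKernel_generators_degree_le
    (p : ℕ) (hp : p.Prime) (F E : Type*) [Field F] [Field E] [Algebra F E]
    [CharP F p] [CharP E p]
    (SF : DiffStr p F) (SE : DiffStr p E) (R : DiffRes p F E SF SE)
    (r : ℕ) (b : Fin r → F) (m : Fin r → ℕ)
    (hb : ∀ i, ¬ ∃ y : F, y ^ p = b i) (hm : ∀ i, 1 ≤ m i)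
    (β : Fin r → E) (hβ : ∀ i, β i ^ p ^ m i = algebraMap F E (b i))
    (hgen : Algebra.adjoin F (Set.range β) = ⊤)
    (n t : ℕ) (ht : 0 < t) (ht' : t < Finset.univ.sup m)
    (k : Fin r → ℕ) (hk : ∀ j, p ^ (t + 1 - m j) ∣ k j)
    (v : DF F) (hv : v ∈ omegaPred F n) :
    R.res ((∏ i, b i ^ k i) • spIter SF t (SF.d v)) ∈ hRel SE n ∧
    (∏ i, b i ^ k i) • spIter SF t (SF.d v) ∈
      AddSubgroup.closure ((hRel SF n : Set (DF F)) ∪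
        { x | ∃ i : Fin r, ∃ z ∈ omegaPred F n, x = b i • SF.d z } ∪
        { x | ∃ (t' : ℕ) (k' : Fin r → ℕ), 0 < t' ∧ t' ≤ t ∧
            (∀ i, k' i < p ^ t' ∧ p ^ (t' + 1 - m i) ∣ k' i) ∧
            ∃ w ∈ omegaPred F n, x = (∏ i, b i ^ k' i) • spIter SF t' (SF.d w) }) :=
  hKernel_generators_degree_le_general p hp F E SF SE R r b m hm β hβ n t k hk v hv
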